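/- Let K ≥ 2 be an integer and let α ∈ ℝ with α ∉ {0,1}. For p, q ∈ relint(Δ^K), define the α-Tsallis relative entropy D^TRE_α(p‖q) = Σ_{k=1}^K q_k·f_α(p_k/q_k), where f_α(x) = (x^α − 1)/(α(α−1)). Then: (i) if α < 1 (and α ≠ 0), D_α(p‖q) ≥ D^TRE_α(p‖q); and (ii) if α > 1, D_α(p‖q) ≤ D^TRE_α(p‖q). -/

import Mathlib

/-!
With `x = p/q`, both divergences are sums of the tangent gap `g(x) = f_α(x) - (x - 1)/(α - 1)` of
the convex generator `f_α` at `1`: the Bregman divergence is `∑ q_k^α g(x_k)` and, since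
`∑ p = ∑ q`, the Tsallis relative entropy is `∑ q_k g(x_k)`. As `g ≥ 0` (Bernoulli's inequality),
the comparison reduces to `q_k^α ≥ q_k` for `α < 1` and `q_k^α ≤ q_k` for `α > 1`, valid since
`q_k ∈ (0, 1)`.
-/

open Finset Real

/-- The α-Tsallis entropy on the positive orthant (Shannon for α = 1, Burg for α = 0). -/
noncomputable def tsallis (α : ℝ) {K : ℕ} (p : Fin K → ℝ) : ℝ :=
  if α = 0 then ∑ k, Real.log (p k)
  else if α = 1 then -∑ k, p k * Real.log (p k)
  else (∑ k, p k ^ α) / (α * (1 - α))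

/-- The gradient of the α-Tsallis entropy on the positive orthant. -/
noncomputable def tsallisGrad (α : ℝ) {K : ℕ} (q : Fin K → ℝ) (k : Fin K) : ℝ :=
  if α = 0 then 1 / q k
  else if α = 1 then -(1 + Real.log (q k))
  else -(q k ^ (α - 1)) / (α - 1)

/-- The Bregman divergence D_α of the negative α-Tsallis entropy:
`D_α(p‖q) = -S_α(p) + S_α(q) + ⟨∇S_α(q), p - q⟩`. -/
noncomputable def breg (α : ℝ) {K : ℕ} (p q : Fin K → ℝ) : ℝ :=
  -tsallis α p + tsallis α q + ∑ k, tsallisGrad α q k * (p k - q k)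

/-- The relative interior of the probability simplex Δ^K. -/
def relintSimplex (K : ℕ) : Set (Fin K → ℝ) :=
  {p | (∀ k, 0 < p k ∧ p k < 1) ∧ ∑ k, p k = 1}

/-- The ℓ¹ norm on ℝ^K. -/
noncomputable def l1 {K : ℕ} (x : Fin K → ℝ) : ℝ := ∑ k, |x k|

/-- The paper's `f_α`: the Tsallis relative entropy is `∑ k, q k * f_α (p k / q k)`. -/
noncomputable def tsallisGenerator (α x : ℝ) : ℝ := (x ^ α - 1) / (α * (α - 1))

lemma one_add_mul_sub_one_le_rpow {α t : ℝ} (ht : 0 < t) (hα : α ≤ 0 ∨ 1 ≤ α) :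
    1 + α * (t - 1) ≤ t ^ α := by
  rcases hα with hα | hα
  · -- Bernoulli with exponent `1 - α ≥ 1` at `1/t`, multiplied by `t`.
    have h := one_add_mul_self_le_rpow_one_add (s := t⁻¹ - 1) (by simp [ht.le]) (p := 1 - α)
      (by linarith)
    rw [add_sub_cancel, inv_rpow ht.le, rpow_sub ht, rpow_one, inv_div] at h
    calc 1 + α * (t - 1) = t * (1 + (1 - α) * (t⁻¹ - 1)) := by field_simp; ring
      _ ≤ t * (t ^ α / t) := by gcongr
      _ = t ^ α := mul_div_cancel₀ _ ht.ne'
  · simpa using one_add_mul_self_le_rpow_one_add (s := t - 1) (by linarith) hα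

lemma rpow_le_one_add_mul_sub_one {α t : ℝ} (ht : 0 ≤ t) (hα₀ : 0 ≤ α) (hα₁ : α ≤ 1) :
    t ^ α ≤ 1 + α * (t - 1) := by
  simpa using rpow_one_add_le_one_add_mul_self (s := t - 1) (by linarith) hα₀ hα₁

lemma tsallisGenerator_sub_tangent_eq {α : ℝ} (hα₀ : α ≠ 0) (hα₁ : α ≠ 1) (x : ℝ) :
    tsallisGenerator α x - (x - 1) / (α - 1) = (x ^ α - 1 - α * (x - 1)) / (α * (α - 1)) := by
  have : α - 1 ≠ 0 := sub_ne_zero.mpr hα₁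
  unfold tsallisGenerator
  field_simp

lemma tsallisGenerator_sub_tangent_nonneg {α t : ℝ} (hα₀ : α ≠ 0) (hα₁ : α ≠ 1) (ht : 0 < t) :
    0 ≤ tsallisGenerator α t - (t - 1) / (α - 1) := by
  rw [tsallisGenerator_sub_tangent_eq hα₀ hα₁]
  rcases lt_or_gt_of_ne hα₀ with hneg | hpos
  · exact div_nonneg (by linarith [one_add_mul_sub_one_le_rpow ht (.inl hneg.le)]) (by nlinarith)
  rcases lt_or_gt_of_ne hα₁ with hlt | hgt
  · apply div_nonneg_of_nonpos
    · linarith [rpow_le_one_add_mul_sub_one ht.le hpos.le hlt.le]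
    · nlinarith
  · exact div_nonneg (by linarith [one_add_mul_sub_one_le_rpow ht (.inr hgt.le)]) (by nlinarith)

section Divergences

variable {K : ℕ} {α : ℝ} {p q : Fin K → ℝ}

lemma breg_eq_sum_rpow_mul_tangent_gap (hα₀ : α ≠ 0) (hα₁ : α ≠ 1) (hp : ∀ k, 0 < p k)
    (hq : ∀ k, 0 < q k) :
    breg α p q = ∑ k, q k ^ α *
      (tsallisGenerator α (p k / q k) - (p k / q k - 1) / (α - 1)) := by
  simp only [breg, tsallis, tsallisGrad, if_neg hα₀, if_neg hα₁, sum_div, ← sum_neg_distrib,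
    ← sum_add_distrib]
  refine sum_congr rfl fun k _ => ?_
  have hqk := hq k
  have : α - 1 ≠ 0 := sub_ne_zero.mpr hα₁
  have : 1 - α ≠ 0 := sub_ne_zero.mpr (Ne.symm hα₁)
  have : q k ^ α ≠ 0 := (rpow_pos_of_pos hqk α).ne'
  rw [tsallisGenerator, div_rpow (hp k).le hqk.le, rpow_sub_one hqk.ne']
  field_simp
  ring

lemma sum_mul_tsallisGenerator_eq_sum_mul_tangent_gap (hq : ∀ k, 0 < q k)
    (hpq : ∑ k, p k = ∑ k, q k) :
    ∑ k, q k * tsallisGenerator α (p k / q k) =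
      ∑ k, q k * (tsallisGenerator α (p k / q k) - (p k / q k - 1) / (α - 1)) := by
  have hlin : ∑ k, q k * ((p k / q k - 1) / (α - 1)) = 0 := by
    calc ∑ k, q k * ((p k / q k - 1) / (α - 1)) = (∑ k, p k - ∑ k, q k) / (α - 1) := by
          rw [← sum_sub_distrib, sum_div]
          exact sum_congr rfl fun k _ => by field_simp [(hq k).ne']
      _ = 0 := by rw [hpq, sub_self, zero_div]
  simp only [mul_sub, sum_sub_distrib, hlin, sub_zero]

end Divergences

theorem breg_vs_tsallis_relative_entropy (K : ℕ)
    (α : ℝ) (hα0 : α ≠ 0) (hα1 : α ≠ 1)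
    (p q : Fin K → ℝ) (hp : p ∈ relintSimplex K) (hq : q ∈ relintSimplex K) :
    (α < 1 → breg α p q ≥ ∑ k, q k * (((p k / q k) ^ α - 1) / (α * (α - 1)))) ∧
    (1 < α → breg α p q ≤ ∑ k, q k * (((p k / q k) ^ α - 1) / (α * (α - 1)))) := by
  obtain ⟨hp01, hpsum⟩ := hp
  obtain ⟨hq01, hqsum⟩ := hq
  have hp0 k : 0 < p k := (hp01 k).1
  have hq0 k : 0 < q k := (hq01 k).1
  have hgap k : 0 ≤ tsallisGenerator α (p k / q k) - (p k / q k - 1) / (α - 1) :=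
    tsallisGenerator_sub_tangent_nonneg hα0 hα1 (div_pos (hp0 k) (hq0 k))
  change (α < 1 → _ ≥ ∑ k, q k * tsallisGenerator α (p k / q k)) ∧
    (1 < α → _ ≤ ∑ k, q k * tsallisGenerator α (p k / q k))
  rw [breg_eq_sum_rpow_mul_tangent_gap hα0 hα1 hp0 hq0,
    sum_mul_tsallisGenerator_eq_sum_mul_tangent_gap hq0 (hpsum.trans hqsum.symm)]
  constructor
  · intro hα
    refine sum_le_sum fun k _ => mul_le_mul_of_nonneg_right ?_ (hgap k)
    simpa using rpow_le_rpow_of_exponent_ge (hq0 k) (hq01 k).2.le hα.le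
  · intro hα
    refine sum_le_sum fun k _ => mul_le_mul_of_nonneg_right ?_ (hgap k)
    simpa using rpow_le_rpow_of_exponent_ge (hq0 k) (hq01 k).2.le hα.le
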